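/- arXiv:1609.08014 — 2 statements merged into one kernel-verified Lean document; each statement's English description precedes it below -/
import Mathlib

section
/- Let (V,u) be a monotone σ-complete order unit normed space. Then V is norm complete, i.e., every Cauchy sequence in V with respect to the order unit norm converges; hence V is a Banach space. -/
/-- The order unit norm on an ordered vector space `V` with order unit `u`:
`‖a‖ = inf {λ : 0 < λ ∧ -λ•u ≤ a ∧ a ≤ λ•u}`. -/
noncomputable def orderUnitNorm {V : Type*} [AddCommGroup V] [PartialOrder V] [Module ℝ V]
    (u a : V) : ℝ :=
  sInf {r : ℝ | 0 < r ∧ -(r • u) ≤ a ∧ a ≤ r • u}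

/-- **Handelman's theorem.** If `(V, u)` is a monotone σ-complete order unit normed space,
then `V` is norm complete: every Cauchy sequence with respect to the order unit norm
converges. -/
theorem handelman_monotone_sigma_complete_implies_norm_complete
    {V : Type*} [AddCommGroup V] [PartialOrder V] [Module ℝ V]
    -- the partial order is translation invariant
    (hadd : ∀ a b c : V, a ≤ b → a + c ≤ b + c)
    -- positive scalar multiples of positive elements are positive
    (hsmul : ∀ (c : ℝ) (a : V), 0 ≤ c → 0 ≤ a → 0 ≤ c • a)
    (u : V) (hu : 0 ≤ u)
    -- `u` is an order unit
    (hunit : ∀ a : V, ∃ n : ℕ, a ≤ (n : ℝ) • u)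
    -- `V` is Archimedean
    (harch : ∀ a : V, (∀ n : ℕ, (n : ℝ) • a ≤ u) → a ≤ 0)
    -- `V` is monotone σ-complete
    (hmsc : ∀ f : ℕ → V, Monotone f → (∃ b : V, ∀ n : ℕ, f n ≤ b) →
      ∃ s : V, IsLUB (Set.range f) s)
    -- a Cauchy sequence with respect to the order unit norm
    (a : ℕ → V)
    (hcauchy : ∀ ε : ℝ, 0 < ε → ∃ N : ℕ, ∀ i j : ℕ, N ≤ i → N ≤ j →
      orderUnitNorm u (a i - a j) < ε) :
    -- the sequence converges in the order unit norm
    ∃ l : V, ∀ ε : ℝ, 0 < ε → ∃ N : ℕ, ∀ n : ℕ, N ≤ n →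
      orderUnitNorm u (a n - l) < ε := by
  -- basic order arithmetic
  have hsubiff : ∀ x y : V, x ≤ y ↔ 0 ≤ y - x := by
    intro x y
    constructor
    · intro h; have := hadd _ _ (-x) h; simpa [sub_eq_add_neg] using this
    · intro h; have := hadd _ _ x h; simpa using this
  have hadd2 : ∀ x y z w : V, x ≤ y → z ≤ w → x + z ≤ y + w := by
    intro x y z w h1 h2
    calc x + z ≤ y + z := hadd _ _ _ h1
    _ = z + y := by abel
    _ ≤ w + y := hadd _ _ _ h2
    _ = y + w := by abel
  have hneg : ∀ x y : V, x ≤ y → -y ≤ -x := by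
    intro x y h
    rw [hsubiff] at h ⊢
    have e : -x - -y = y - x := by abel
    rw [e]; exact h
  have hsmulu : ∀ r s : ℝ, r ≤ s → r • u ≤ s • u := by
    intro r s h
    rw [hsubiff]
    have e : s • u - r • u = (s - r) • u := by module
    rw [e]; exact hsmul _ _ (by linarith) hu
  -- the defining set of the norm is nonempty and bounded below
  have hnonempty : ∀ x : V, {r : ℝ | 0 < r ∧ -(r • u) ≤ x ∧ x ≤ r • u}.Nonempty := by
    intro x
    obtain ⟨n, hn⟩ := hunit x
    obtain ⟨m, hm⟩ := hunit (-x)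
    refine ⟨(n : ℝ) + m + 1, by positivity, ?_, ?_⟩
    · have h1 : -x ≤ ((n : ℝ) + m + 1) • u :=
        le_trans hm (hsmulu _ _ (by push_cast; linarith [Nat.cast_nonneg (α := ℝ) n]))
      have := hneg _ _ h1
      simpa using this
    · exact le_trans hn (hsmulu _ _ (by push_cast; linarith [Nat.cast_nonneg (α := ℝ) m]))
  have hbdd : ∀ x : V, BddBelow {r : ℝ | 0 < r ∧ -(r • u) ≤ x ∧ x ≤ r • u} :=
    fun x => ⟨0, fun r hr => hr.1.le⟩
  have hnormle : ∀ (x : V) (ε : ℝ), 0 < ε → -(ε • u) ≤ x → x ≤ ε • u →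
      orderUnitNorm u x ≤ ε := by
    intro x ε hε h1 h2
    exact csInf_le (hbdd x) ⟨hε, h1, h2⟩
  have hnormbd : ∀ (x : V) (ε : ℝ), orderUnitNorm u x < ε →
      -(ε • u) ≤ x ∧ x ≤ ε • u := by
    intro x ε hlt
    obtain ⟨s, hs, hsε⟩ := exists_lt_of_csInf_lt (hnonempty x) hlt
    constructor
    · exact le_trans (hneg _ _ (hsmulu s ε hsε.le)) hs.2.1
    · exact le_trans hs.2.2 (hsmulu s ε hsε.le)
  -- choose a rapidly Cauchy subsequence
  set r : ℕ → ℝ := fun k => (2⁻¹ : ℝ) ^ k with hrdef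
  have hrpos : ∀ k, 0 < r k := fun k => by positivity
  have hrhalf : ∀ k, 2 * r (k + 1) = r k := by
    intro k; simp only [hrdef, pow_succ]; ring
  have hN : ∀ k : ℕ, ∃ N, ∀ i j, N ≤ i → N ≤ j →
      orderUnitNorm u (a i - a j) < r k := fun k => hcauchy _ (hrpos k)
  choose N hNs using hN
  set n : ℕ → ℕ := fun k => (Finset.range (k + 1)).sup N with hndef
  have hNn : ∀ k, N k ≤ n k := fun k =>
    Finset.le_sup (Finset.mem_range.mpr (Nat.lt_succ_self k))
  have hnmono : Monotone n := by
    intro i j hij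
    exact Finset.sup_mono (Finset.range_subset_range.mpr (by omega))
  set c : ℕ → V := fun k => a (n k) with hcdef
  have hck : ∀ k, orderUnitNorm u (c (k + 1) - c k) < r k := by
    intro k
    exact hNs k (n (k + 1)) (n k) (le_trans (hNn k) (hnmono (Nat.le_succ k))) (hNn k)
  have hcb : ∀ k, -(r k • u) ≤ c (k + 1) - c k ∧ c (k + 1) - c k ≤ r k • u :=
    fun k => hnormbd _ _ (hck k)
  -- shifted sequence is monotone
  set f : ℕ → V := fun k => c k - (2 * r k) • u with hfdef
  have hf : Monotone f := by
    apply monotone_nat_of_le_succ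
    intro k
    rw [hsubiff]
    have key : f (k + 1) - f k = (c (k + 1) - c k) - (-(r k • u)) := by
      show (c (k + 1) - (2 * r (k + 1)) • u) - (c k - (2 * r k) • u) = _
      rw [hrhalf k]; module
    rw [key, ← hsubiff]
    exact (hcb k).1
  -- telescoping bound
  have htel : ∀ k m, c (k + m) ≤ c k + (2 * r k - 2 * r (k + m)) • u := by
    intro k m
    induction m with
    | zero =>
      rw [hsubiff]
      have e : c k + (2 * r k - 2 * r (k + 0)) • u - c (k + 0) = (0 : ℝ) • u := by
        show c k + (2 * r k - 2 * r k) • u - c k = (0:ℝ) • u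
        module
      rw [e]; exact hsmul _ _ le_rfl hu
    | succ m ih =>
      have h1 : c (k + m) + (c (k + (m + 1)) - c (k + m)) ≤
          (c k + (2 * r k - 2 * r (k + m)) • u) + r (k + m) • u :=
        hadd2 _ _ _ _ ih (hcb (k + m)).2
      have e1 : c (k + m) + (c (k + (m + 1)) - c (k + m)) = c (k + (m + 1)) := by abel
      have e2 : (c k + (2 * r k - 2 * r (k + m)) • u) + r (k + m) • u =
          c k + (2 * r k - 2 * r (k + (m + 1))) • u := by
        have : k + (m + 1) = (k + m) + 1 := by omega
        rw [this, ← hrhalf (k + m)]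
        module
      rw [e1, e2] at h1
      exact h1
  have hcle : ∀ k m, k ≤ m → c m ≤ c k + (2 * r k) • u := by
    intro k m hkm
    obtain ⟨j, rfl⟩ := Nat.exists_eq_add_of_le hkm
    refine le_trans (htel k j) ?_
    calc c k + (2 * r k - 2 * r (k + j)) • u
        = (2 * r k - 2 * r (k + j)) • u + c k := by abel
      _ ≤ (2 * r k) • u + c k :=
          hadd _ _ _ (hsmulu _ _ (by linarith [hrpos (k + j)]))
      _ = c k + (2 * r k) • u := by abel
  have hfc : ∀ k, f k ≤ c k := by
    intro k
    rw [hsubiff]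
    have e : c k - f k = (2 * r k) • u := by show c k - (c k - (2 * r k) • u) = _; abel
    rw [e]; exact hsmul _ _ (by linarith [hrpos k]) hu
  -- the supremum exists
  obtain ⟨l, hl⟩ := hmsc f hf ⟨c 0 + (2 * r 0) • u, fun m =>
    le_trans (hfc m) (hcle 0 m (Nat.zero_le m))⟩
  -- bounds on c k - l
  have hup : ∀ k, c k - l ≤ (2 * r k) • u := by
    intro k
    have h1 : f k ≤ l := hl.1 (Set.mem_range_self k)
    rw [hsubiff] at h1 ⊢
    have e : (2 * r k) • u - (c k - l) = l - f k := by
      show _ = l - (c k - (2 * r k) • u); abel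
    rw [e]; exact h1
  have hlo : ∀ k, -((2 * r k) • u) ≤ c k - l := by
    intro k
    have hub : ∀ m, f m ≤ c k + (2 * r k) • u := by
      intro m
      rcases le_or_gt m k with h | h
      · refine le_trans (hf h) (le_trans (hfc k) ?_)
        rw [hsubiff]
        have e : c k + (2 * r k) • u - c k = (2 * r k) • u := by abel
        rw [e]; exact hsmul _ _ (by linarith [hrpos k]) hu
      · exact le_trans (hfc m) (hcle k m h.le)
    have h2 : l ≤ c k + (2 * r k) • u := hl.2 (by rintro x ⟨m, rfl⟩; exact hub m)
    rw [hsubiff] at h2 ⊢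
    have e : c k - l - -((2 * r k) • u) = c k + (2 * r k) • u - l := by abel
    rw [e]; exact h2
  -- conclude
  refine ⟨l, ?_⟩
  intro ε hε
  obtain ⟨k, hk⟩ := exists_pow_lt_of_lt_one (show (0:ℝ) < ε / 4 by linarith)
    (by norm_num : (2⁻¹ : ℝ) < 1)
  have hrk : r k < ε / 4 := hk
  refine ⟨n k, ?_⟩
  intro m hm
  have hclose : orderUnitNorm u (a m - c k) < r k :=
    hNs k m (n k) (le_trans (hNn k) hm) (hNn k)
  obtain ⟨hb1, hb2⟩ := hnormbd _ _ hclose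
  have hupper : a m - l ≤ (3 * r k) • u := by
    have h1 : (a m - c k) + (c k - l) ≤ r k • u + (2 * r k) • u :=
      hadd2 _ _ _ _ hb2 (hup k)
    have e1 : (a m - c k) + (c k - l) = a m - l := by abel
    have e2 : r k • u + (2 * r k) • u = (3 * r k) • u := by module
    rwa [e1, e2] at h1
  have hlower : -((3 * r k) • u) ≤ a m - l := by
    have h1 : -(r k • u) + -((2 * r k) • u) ≤ (a m - c k) + (c k - l) :=
      hadd2 _ _ _ _ hb1 (hlo k)
    have e1 : (a m - c k) + (c k - l) = a m - l := by abel
    have e2 : -(r k • u) + -((2 * r k) • u) = -((3 * r k) • u) := by module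
    rwa [e1, e2] at h1
  have := hnormle (a m - l) (3 * r k) (by linarith [hrpos k]) hlower hupper
  linarith
end

section
/- Let (V,u) be a monotone σ-complete order unit normed space and let (aₙ)ₙ₌₀^∞ be a sequence in V with a₀ = 0, −u ≤ aₙ ≤ u for all n, and −2⁻ⁿ•u < a_{n+1} − aₙ < 2⁻ⁿ•u for all n ≥ 1. Define bₙ = 2⁻ⁿ•u + a_{n+1} − aₙ for n = 0,1,2,... and let s be the supremum of the partial sums sₘ = Σₙ₌₀^m bₙ (which exists). Then the sequence (aₘ) converges in the order unit norm to s − 2•u. -/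
/-- Let `(V,u)` be a monotone σ-complete order unit normed space and `(aₙ)` a sequence with
`a₀ = 0`, `-u ≤ aₙ ≤ u`, and `-2⁻ⁿ•u < a_{n+1} - aₙ < 2⁻ⁿ•u` for `n ≥ 1`. With
`bₙ = 2⁻ⁿ•u + a_{n+1} - aₙ` and `s` the supremum of the partial sums `sₘ = ∑_{n=0}^m bₙ`
(which exists), the sequence `(aₘ)` converges in the order unit norm to `s - 2•u`. -/
theorem cauchy_subsequence_limit_eq_sup_sub_two_smul_unit
    {V : Type*} [AddCommGroup V] [PartialOrder V] [Module ℝ V]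
    -- the partial order is translation invariant
    (hadd : ∀ a b c : V, a ≤ b → a + c ≤ b + c)
    -- positive scalar multiples of positive elements are positive
    (hsmul : ∀ (c : ℝ) (a : V), 0 ≤ c → 0 ≤ a → 0 ≤ c • a)
    (u : V) (hu : 0 ≤ u)
    -- `u` is an order unit
    (hunit : ∀ a : V, ∃ n : ℕ, a ≤ (n : ℝ) • u)
    -- `V` is Archimedean
    (harch : ∀ a : V, (∀ n : ℕ, (n : ℝ) • a ≤ u) → a ≤ 0)
    -- `V` is monotone σ-complete
    (hmsc : ∀ f : ℕ → V, Monotone f → (∃ b : V, ∀ n : ℕ, f n ≤ b) →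
      ∃ s : V, IsLUB (Set.range f) s)
    -- the given sequence
    (a : ℕ → V)
    (ha₀ : a 0 = 0)
    (hbd : ∀ n : ℕ, -u ≤ a n ∧ a n ≤ u)
    (hdiff : ∀ n : ℕ, 1 ≤ n →
      -(((2 : ℝ) ^ n)⁻¹ • u) < a (n + 1) - a n ∧ a (n + 1) - a n < ((2 : ℝ) ^ n)⁻¹ • u)
    -- `bₙ = 2⁻ⁿ•u + a_{n+1} - aₙ`
    (b : ℕ → V)
    (hb : ∀ n : ℕ, b n = ((2 : ℝ) ^ n)⁻¹ • u + a (n + 1) - a n)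
    -- `s` is the supremum of the partial sums `sₘ = ∑_{n=0}^m bₙ` (which exists)
    (s : V)
    (hs : IsLUB (Set.range (fun m : ℕ => ∑ n ∈ Finset.range (m + 1), b n)) s) :
    -- `(aₘ)` converges to `s - 2•u` in the order unit norm
    ∀ ε : ℝ, 0 < ε → ∃ N : ℕ, ∀ m : ℕ, N ≤ m →
      orderUnitNorm u (a m - (s - (2 : ℝ) • u)) < ε := by
  -- order toolkit
  have hle : ∀ x y : V, x ≤ y ↔ 0 ≤ y - x := by
    intro x y
    constructor
    · intro h
      have := hadd x y (-x) h
      simpa [sub_eq_add_neg] using this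
    · intro h
      have := hadd 0 (y - x) x h
      simpa using this
  have hadd2 : ∀ {x y : V}, 0 ≤ x → 0 ≤ y → 0 ≤ x + y := by
    intro x y hx hy
    have h1 := hadd 0 y x hy
    rw [zero_add, add_comm] at h1
    exact le_trans hx h1
  set S : ℕ → V := fun m : ℕ => ∑ n ∈ Finset.range (m + 1), b n with hSdef
  -- partial sums formula
  have hS : ∀ m : ℕ, S m = a (m + 1) + (2 : ℝ) • u - ((2 : ℝ) ^ m)⁻¹ • u := by
    intro m
    have h1 : S m = (∑ n ∈ Finset.range (m + 1), ((2 : ℝ) ^ n)⁻¹ • u)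
        + ∑ n ∈ Finset.range (m + 1), (a (n + 1) - a n) := by
      rw [hSdef, ← Finset.sum_add_distrib]
      refine Finset.sum_congr rfl fun n _ => ?_
      rw [hb n]; abel
    rw [h1, Finset.sum_range_sub, ha₀, ← Finset.sum_smul]
    have hgeo : ∑ n ∈ Finset.range (m + 1), ((2 : ℝ) ^ n)⁻¹ = 2 - ((2 : ℝ) ^ m)⁻¹ := by
      simp only [← inv_pow]
      rw [geom_sum_eq (by norm_num)]
      field_simp
      ring
    rw [hgeo, sub_smul]
    abel
  -- b n ≥ 0
  have hb0 : ∀ n : ℕ, 0 ≤ b n := by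
    intro n
    rcases Nat.eq_zero_or_pos n with rfl | hn
    · rw [hb 0, ha₀, pow_zero, inv_one, one_smul, sub_zero]
      have h1 := (hbd 1).1
      rw [hle] at h1
      have heq : a 1 - -u = u + a (0 + 1) := by abel_nf
      rw [heq] at h1
      exact h1
    · have h1 := (hdiff n hn).1.le
      rw [hle] at h1
      have heq : a (n + 1) - a n - -(((2:ℝ)^n)⁻¹ • u)
          = ((2:ℝ)^n)⁻¹ • u + a (n+1) - a n := by abel
      rw [heq] at h1
      rw [hb n]
      exact h1
  -- partial sums are monotone
  have hSmono : Monotone S := by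
    apply monotone_nat_of_le_succ
    intro n
    rw [hle]
    have h1 : S (n + 1) - S n = b (n + 1) := by
      rw [hSdef]; simp [Finset.sum_range_succ]
    rw [h1]
    exact hb0 (n + 1)
  -- upper estimate
  have hup : ∀ m : ℕ, a (m + 1) - (s - (2 : ℝ) • u) ≤ ((2 : ℝ) ^ m)⁻¹ • u := by
    intro m
    have h1 : S m ≤ s := hs.1 ⟨m, rfl⟩
    rw [hle] at h1 ⊢
    have heq : ((2 : ℝ) ^ m)⁻¹ • u - (a (m + 1) - (s - (2 : ℝ) • u)) = s - S m := by
      rw [hS m]; abel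
    rw [heq]; exact h1
  -- telescoping bound
  have htel : ∀ m k : ℕ, m ≤ k →
      a (k + 1) - a (m + 1) ≤ (((2 : ℝ) ^ m)⁻¹ - ((2 : ℝ) ^ k)⁻¹) • u := by
    intro m
    refine Nat.le_induction ?_ ?_
    · simp
    · intro k hmk ih
      have hstep := (hdiff (k + 1) (by omega)).2.le
      rw [hle] at ih hstep ⊢
      have heq : (((2:ℝ)^m)⁻¹ - ((2:ℝ)^(k+1))⁻¹) • u - (a (k + 1 + 1) - a (m + 1))
          = ((((2:ℝ)^m)⁻¹ - ((2:ℝ)^k)⁻¹) • u - (a (k+1) - a (m+1)))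
            + (((2:ℝ)^(k+1))⁻¹ • u - (a (k+1+1) - a (k+1))) := by
        have h2 : ((2:ℝ)^(k+1))⁻¹ = 2⁻¹ * ((2:ℝ)^k)⁻¹ := by
          rw [pow_succ, mul_inv, mul_comm]
        rw [h2]
        module
      rw [heq]
      exact hadd2 ih hstep
  -- lower estimate
  have hlow : ∀ m : ℕ, -(((2 : ℝ) ^ m)⁻¹ • u) ≤ a (m + 1) - (s - (2 : ℝ) • u) := by
    intro m
    have hub : s ≤ a (m + 1) + ((2 : ℝ) ^ m)⁻¹ • u + (2 : ℝ) • u := by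
      apply hs.2
      rintro v ⟨k, rfl⟩
      show S k ≤ _
      rcases le_total k m with hkm | hmk
      · refine le_trans (hSmono hkm) ?_
        rw [hle, hS m]
        have heq : a (m+1) + ((2:ℝ)^m)⁻¹ • u + (2:ℝ) • u
            - (a (m + 1) + (2 : ℝ) • u - ((2 : ℝ) ^ m)⁻¹ • u)
            = ((2:ℝ) * ((2:ℝ)^m)⁻¹) • u := by module
        rw [heq]
        exact hsmul _ _ (by positivity) hu
      · have h1 := htel m k hmk
        rw [hle] at h1 ⊢
        have heq : a (m+1) + ((2:ℝ)^m)⁻¹ • u + (2:ℝ) • u - S k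
            = ((((2:ℝ)^m)⁻¹ - ((2:ℝ)^k)⁻¹) • u - (a (k+1) - a (m+1)))
              + ((2:ℝ) * ((2:ℝ)^k)⁻¹) • u := by
          rw [hS k]; module
        rw [heq]
        exact hadd2 h1 (hsmul _ _ (by positivity) hu)
    rw [hle] at hub ⊢
    have heq : a (m + 1) - (s - (2 : ℝ) • u) - -(((2 : ℝ) ^ m)⁻¹ • u)
        = a (m + 1) + ((2 : ℝ) ^ m)⁻¹ • u + (2 : ℝ) • u - s := by abel
    rw [heq]
    exact hub
  -- conclude
  intro ε hε
  obtain ⟨n, hn⟩ : ∃ n : ℕ, ((2 : ℝ) ^ n)⁻¹ < ε := by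
    obtain ⟨n, hn⟩ := exists_pow_lt_of_lt_one hε (by norm_num : (1:ℝ)/2 < 1)
    exact ⟨n, by rwa [one_div, inv_pow] at hn⟩
  refine ⟨n + 1, ?_⟩
  intro m hm
  obtain _ | m' := m
  · omega
  have hmem : ((2 : ℝ) ^ m')⁻¹ ∈
      {r : ℝ | 0 < r ∧ -(r • u) ≤ a (m' + 1) - (s - (2:ℝ) • u)
        ∧ a (m' + 1) - (s - (2:ℝ) • u) ≤ r • u} := by
    exact ⟨by positivity, hlow m', hup m'⟩
  have hbdd : BddBelow {r : ℝ | 0 < r ∧ -(r • u) ≤ a (m' + 1) - (s - (2:ℝ) • u)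
      ∧ a (m' + 1) - (s - (2:ℝ) • u) ≤ r • u} :=
    ⟨0, fun r hr => hr.1.le⟩
  have h1 : orderUnitNorm u (a (m' + 1) - (s - (2 : ℝ) • u)) ≤ ((2 : ℝ) ^ m')⁻¹ :=
    csInf_le hbdd hmem
  have h2 : ((2 : ℝ) ^ m')⁻¹ ≤ ((2 : ℝ) ^ n)⁻¹ := by
    gcongr
    · norm_num
    · omega
  exact lt_of_le_of_lt h1 (lt_of_le_of_lt h2 hn)
end
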